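/- In the R-semantics, FOR-loop reversal: if σ(x) = (v, s, c) and ⟨FOR x {P}, σ⟩ ⇓ τ, then ⟨FOR x {inv P}, τ⟩ ⇓ σ, provided x does not occur in P. -/

import Mathlib

def push : ℤ × List ℤ × ℕ → ℤ × List ℤ × ℕ
  | (v, t, 0) => (0, v::t, 0)
  | (0, v::t, c+1) => (0, v::t, c+1)
  | (u, s, c+1) => (u, s, c)

def pop : ℤ × List ℤ × ℕ → ℤ × List ℤ × ℕ
  | (0, v::t, 0) => (v, t, 0)
  | (0, v::t, c+1) => (0, v::t, c+1)
  | (u, s, c) => (u, s, c+1)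

inductive Term where
  | skip : Term
  | inc : String → Term
  | dec : String → Term
  | push : String → Term
  | pop : String → Term
  | seq : Term → Term → Term
  | forLoop : String → Term → Term

def inv : Term → Term
  | .skip => .skip
  | .inc x => .dec x
  | .dec x => .inc x
  | .push x => .pop x
  | .pop x => .push x
  | .seq p q => .seq (inv q) (inv p)
  | .forLoop x p => .forLoop x (inv p)

def occurs (x : String) : Term → Prop
  | .skip => False
  | .inc y => x = y
  | .dec y => x = y
  | .push y => x = y
  | .pop y => x = y
  | .seq p q => occurs x p ∨ occurs x q
  | .forLoop y p => x = y ∨ occurs x p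

/-- Well-formed terms: the leading variable of a `FOR` never occurs in its body. -/
def WF : Term → Prop
  | .seq p q => WF p ∧ WF q
  | .forLoop x p => ¬ occurs x p ∧ WF p
  | _ => True

abbrev State := String → ℤ × List ℤ × ℕ

def upd (σ : State) (x : String) (p : ℤ × List ℤ × ℕ) : State :=
  fun y => if y = x then p else σ y

mutual
/-- The big-step R-semantics of S-CORE. -/
inductive Bigstep : Term → State → State → Prop where
  | skip (σ) : Bigstep .skip σ σ
  | inc (x σ) : Bigstep (.inc x) σ (upd σ x ((σ x).1 + 1, (σ x).2.1, (σ x).2.2))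
  | dec (x σ) : Bigstep (.dec x) σ (upd σ x ((σ x).1 - 1, (σ x).2.1, (σ x).2.2))
  | push (x σ) : Bigstep (.push x) σ (upd σ x (_root_.push (σ x)))
  | pop (x σ) : Bigstep (.pop x) σ (upd σ x (_root_.pop (σ x)))
  | seq {p q σ ν τ} : Bigstep p σ ν → Bigstep q ν τ → Bigstep (.seq p q) σ τ
  | forFwd {x p σ τ} : (σ x).1 ≥ 0 → Iter p (σ x).1.toNat σ τ →
      Bigstep (.forLoop x p) σ τ
  | forBwd {x p σ τ} : (σ x).1 < 0 → Iter (inv p) (-(σ x).1).toNat σ τ →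
      Bigstep (.forLoop x p) σ τ

/-- `Iter p n σ τ`: `n`-fold iteration of `p` takes `σ` to `τ`. -/
inductive Iter : Term → ℕ → State → State → Prop where
  | base (p σ) : Iter p 0 σ σ
  | step {p n σ ν τ} : Bigstep p σ ν → Iter p n ν τ → Iter p (n+1) σ τ
end

/-!
A terminating run is reversed construct by construct: `INC`/`DEC` and `PUSH`/`POP` undo each
other, a sequence is undone in the opposite order, and an `n`-fold iteration of `p` is undone by
an `n`-fold iteration of `inv p`. For a loop `FOR x {p}` the latter suffices because `x` does
not occur in `p`, so its value — and hence the iteration count and the direction of the loop —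
is the same in the final state as in the initial one. The recursion is on derivations rather
than on terms, since a backward loop runs `inv p`, which is not a subterm of `FOR x {p}`.
-/

lemma pop_push (s : ℤ × List ℤ × ℕ) : pop (push s) = s := by
  obtain ⟨v, t, _ | c⟩ := s <;> rcases v with (_ | _) | _ <;>
    rcases t with _ | ⟨a, t⟩ <;> rfl

lemma push_pop (s : ℤ × List ℤ × ℕ) : push (pop s) = s := by
  obtain ⟨v, t, _ | c⟩ := s <;> rcases v with (_ | _) | _ <;>
    rcases t with _ | ⟨a, t⟩ <;> rfl

@[simp] lemma upd_self (σ : State) (x : String) (a : ℤ × List ℤ × ℕ) : upd σ x a x = a :=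
  if_pos rfl

lemma upd_of_ne {σ : State} {x y : String} (a : ℤ × List ℤ × ℕ) (h : y ≠ x) :
    upd σ x a y = σ y := by
  simp [upd, h]

@[simp] lemma upd_idem (σ : State) (x : String) (a b : ℤ × List ℤ × ℕ) :
    upd (upd σ x a) x b = upd σ x b := by
  funext y; by_cases hy : y = x <;> simp [upd, hy]

@[simp] lemma upd_eq_self (σ : State) (x : String) : upd σ x (σ x) = σ := by
  funext y; by_cases hy : y = x <;> simp [upd, hy]

@[simp] lemma occurs_inv (x : String) (p : Term) : occurs x (inv p) ↔ occurs x p := by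
  induction p with
  | seq a b iha ihb => simp [inv, occurs, iha, ihb, or_comm]
  | forLoop y a ih => simp [inv, occurs, ih]
  | _ => simp [inv, occurs]

lemma WF.inv {p : Term} (h : WF p) : WF (inv p) := by
  induction p with
  | seq a b iha ihb => exact ⟨ihb h.2, iha h.1⟩
  | forLoop y a ih => exact ⟨by simpa using h.1, ih h.2⟩
  | _ => trivial

theorem Iter.snoc {p : Term} {n : ℕ} {σ ν τ : State} :
    Iter p n σ ν → Bigstep p ν τ → Iter p (n + 1) σ τ
  | .base _ _, h => .step h (.base _ _)
  | .step h₁ h₂, h => .step h₁ (h₂.snoc h)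

mutual
theorem Bigstep.apply_eq_of_not_occurs {x : String} {p : Term} {σ τ : State}
    (hx : ¬ occurs x p) : Bigstep p σ τ → τ x = σ x
  | .skip _ => rfl
  | .inc y _ | .dec y _ | .push y _ | .pop y _ => upd_of_ne _ hx
  | .seq h₁ h₂ => by
      simp only [occurs, not_or] at hx
      rw [h₂.apply_eq_of_not_occurs hx.2, h₁.apply_eq_of_not_occurs hx.1]
  | .forFwd _ h => h.apply_eq_of_not_occurs (fun h' => hx (.inr h'))
  | .forBwd _ h => h.apply_eq_of_not_occurs (by simpa using fun h' => hx (.inr h'))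

theorem Iter.apply_eq_of_not_occurs {x : String} {p : Term} {n : ℕ} {σ τ : State}
    (hx : ¬ occurs x p) : Iter p n σ τ → τ x = σ x
  | .base _ _ => rfl
  | .step h₁ h₂ => (h₂.apply_eq_of_not_occurs hx).trans (h₁.apply_eq_of_not_occurs hx)
end

mutual
theorem Bigstep.reverse {p : Term} {σ τ : State} (hp : WF p) :
    Bigstep p σ τ → Bigstep (inv p) τ σ
  | .skip _ => .skip _
  | .inc y σ => by
      simpa [inv] using Bigstep.dec y (upd σ y ((σ y).1 + 1, (σ y).2.1, (σ y).2.2))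
  | .dec y σ => by
      simpa [inv] using Bigstep.inc y (upd σ y ((σ y).1 - 1, (σ y).2.1, (σ y).2.2))
  | .push y σ => by simpa [inv, pop_push] using Bigstep.pop y (upd σ y (push (σ y)))
  | .pop y σ => by simpa [inv, push_pop] using Bigstep.push y (upd σ y (pop (σ y)))
  | .seq h₁ h₂ => .seq (h₂.reverse hp.2) (h₁.reverse hp.1)
  | .forFwd hx h => by
      have hτx := h.apply_eq_of_not_occurs hp.1
      exact .forFwd (hτx ▸ hx) (hτx ▸ h.reverse hp.2)
  | .forBwd hx h => by
      have hτx := h.apply_eq_of_not_occurs (by simpa using hp.1)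
      exact .forBwd (hτx ▸ hx) (hτx ▸ h.reverse hp.2.inv)

theorem Iter.reverse {p : Term} {n : ℕ} {σ τ : State} (hp : WF p) :
    Iter p n σ τ → Iter (inv p) n τ σ
  | .base _ _ => .base _ _
  | .step h₁ h₂ => (h₂.reverse hp).snoc (h₁.reverse hp)
end

theorem rsem_for_reversal (x : String) (P : Term) (σ τ : State)
    (hx : ¬ occurs x P) (hP : WF P)
    (h : Bigstep (.forLoop x P) σ τ) :
    Bigstep (.forLoop x (inv P)) τ σ :=
  Bigstep.reverse (p := .forLoop x P) ⟨hx, hP⟩ h
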